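/- For every integer N ≥ 1, every real w_0 > 0, and every t ∈ (−w_0, w_0), there exists a real polynomial S of degree at most 2N−2 such that: S(λ) ≥ 0 for all λ ∈ ℝ; S(t) = 1; and ∫_{−w_0}^{w_0} S(λ) dλ ≤ 2π w_0 / N*, where N* = N if N is odd and N* = N−1 if N is even. -/
import Mathlib


open MeasureTheory Filter

noncomputable section

open Finset Polynomial intervalIntegral Real in
private lemma chebdeg' : ∀ k : ℕ, (Chebyshev.T ℝ (k:ℤ)).natDegree ≤ k
  | 0 => by simp [Chebyshev.T_zero]
  | 1 => by simp [Chebyshev.T_one]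
  | (k+2) => by
      have h1 := chebdeg' k
      have h2 := chebdeg' (k+1)
      have e : ((k+2:ℕ):ℤ) = ((k:ℤ)) + 2 := by push_cast; ring
      have e2 : ((k+1:ℕ):ℤ) = ((k:ℤ)) + 1 := by push_cast; ring
      rw [e2] at h2
      rw [e, Chebyshev.T_add_two]
      refine le_trans (natDegree_sub_le _ _) ?_
      simp only [max_le_iff]
      refine ⟨le_trans natDegree_mul_le ?_, by omega⟩
      have hx : (2 * X : ℝ[X]).natDegree ≤ 1 := le_trans natDegree_mul_le (by simp)
      omega

open Finset Polynomial intervalIntegral Real in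
private lemma sumid' : ∀ M : ℕ, ∑ k ∈ Finset.range M, (k:ℝ) = M * (M - 1) / 2 := by
  intro M
  induction M with
  | zero => simp
  | succ m ih => rw [Finset.sum_range_succ, ih]; push_cast; ring

open Finset Polynomial intervalIntegral Real in
private lemma intCos' (n : ℤ) : ∫ θ in (0:ℝ)..π, Real.cos (n * θ) = if n = 0 then π else 0 := by
  rcases eq_or_ne n 0 with h | h
  · simp [h, Real.pi_pos.le]
  · have hn : ((n:ℝ)) ≠ 0 := Int.cast_ne_zero.mpr h
    simp only [h, if_false]
    rw [intervalIntegral.integral_comp_mul_left (fun x => Real.cos x) hn, integral_cos]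
    simp [Real.sin_int_mul_pi]

open Finset Polynomial intervalIntegral Real in
private lemma orth' (k l : ℕ) : ∫ θ in (0:ℝ)..π, Real.cos (k * θ) * Real.cos (l * θ)
    = if k = l then (if k = 0 then π else π / 2) else 0 := by
  have key : ∀ θ : ℝ, Real.cos (k * θ) * Real.cos (l * θ)
      = (Real.cos ((((k:ℤ) - l : ℤ)) * θ) + Real.cos ((((k:ℤ) + l : ℤ)) * θ)) / 2 := by
    intro θ
    push_cast
    rw [show ((k:ℝ) - l) * θ = (k:ℝ)*θ - l*θ by ring, show ((k:ℝ) + l) * θ = (k:ℝ)*θ + l*θ by ring,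
      Real.cos_sub, Real.cos_add]
    ring
  simp only [key]
  rw [intervalIntegral.integral_div]
  rw [intervalIntegral.integral_add
    ((by fun_prop : Continuous fun θ : ℝ => Real.cos ((((k:ℤ) - l : ℤ)) * θ)).intervalIntegrable _ _)
    ((by fun_prop : Continuous fun θ : ℝ => Real.cos ((((k:ℤ) + l : ℤ)) * θ)).intervalIntegrable _ _)]
  rw [intCos', intCos']
  rcases eq_or_ne k l with h | h
  · subst h
    rcases eq_or_ne k 0 with h0 | h0
    · subst h0; norm_num
    · have : ((k:ℤ) + k) ≠ 0 := by positivity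
      simp [h0, this]
  · have h1 : ((k:ℤ) - l) ≠ 0 := by
      simp only [sub_ne_zero]; exact_mod_cast h
    have h2 : ¬((k:ℤ) + l = 0 ∧ True) := by
      rintro ⟨h2, -⟩
      have : k = 0 ∧ l = 0 := by omega
      exact h (by omega)
    simp only [h1, if_false, h]
    rcases eq_or_ne ((k:ℤ) + l) 0 with h3 | h3
    · exact absurd h3 (fun hh => h2 ⟨hh, trivial⟩)
    · simp [h3]

open Finset Polynomial intervalIntegral Real in
private lemma reflect_cos' (φ : ℝ) (m : ℕ) :
    ∑ j ∈ Finset.range m, Real.cos ((j:ℝ) * φ - m * φ)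
      = ∑ k ∈ Finset.range m, Real.cos ((k:ℝ) * φ) + Real.cos ((m:ℝ) * φ) - 1 := by
  have h := Finset.sum_range_reflect (fun j => Real.cos ((j:ℝ) * φ - m * φ)) m
  rw [← h]
  have e : ∀ j ∈ Finset.range m, Real.cos (((m - 1 - j : ℕ):ℝ) * φ - m * φ)
      = Real.cos (((j:ℝ) + 1) * φ) := by
    intro j hj
    rw [Finset.mem_range] at hj
    have h1 : ((m - 1 - j : ℕ):ℝ) = (m:ℝ) - 1 - j := by
      have : m - 1 - j = m - (1 + j) := by omega
      rw [this, Nat.cast_sub (by omega)]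
      push_cast; ring
    rw [h1, show ((m:ℝ) - 1 - j) * φ - m * φ = -(((j:ℝ) + 1) * φ) by ring, Real.cos_neg]
  rw [Finset.sum_congr rfl e]
  have h2 := Finset.sum_range_succ' (fun k => Real.cos ((k:ℝ) * φ)) m
  rw [Finset.sum_range_succ] at h2
  simp only [Nat.cast_zero, zero_mul, Real.cos_zero, Nat.cast_add, Nat.cast_one] at h2
  linarith [h2]

open Finset Polynomial intervalIntegral Real in
private lemma GH' (φ : ℝ) : ∀ m : ℕ,
    ∑ j ∈ Finset.range m, ∑ l ∈ Finset.range m, Real.cos ((j:ℝ) * φ - l * φ)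
      = 2 * ∑ k ∈ Finset.range m, ((m:ℝ) - k) * Real.cos ((k:ℝ) * φ) - m := by
  intro m
  induction m with
  | zero => simp
  | succ m ih =>
      rw [Finset.sum_range_succ]
      have inner : ∀ j : ℕ, ∑ l ∈ Finset.range (m+1), Real.cos ((j:ℝ) * φ - l * φ)
          = ∑ l ∈ Finset.range m, Real.cos ((j:ℝ) * φ - l * φ) + Real.cos ((j:ℝ) * φ - m * φ) :=
        fun j => Finset.sum_range_succ _ m
      simp only [inner]
      rw [Finset.sum_add_distrib, ih]
      have e1 : ∑ j ∈ Finset.range m, Real.cos ((j:ℝ) * φ - m * φ)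
          = ∑ k ∈ Finset.range m, Real.cos ((k:ℝ) * φ) + Real.cos ((m:ℝ) * φ) - 1 :=
        reflect_cos' φ m
      have e2 : ∑ l ∈ Finset.range m, Real.cos ((m:ℝ) * φ - l * φ)
          = ∑ k ∈ Finset.range m, Real.cos ((k:ℝ) * φ) + Real.cos ((m:ℝ) * φ) - 1 := by
        rw [← e1]
        exact Finset.sum_congr rfl fun l _ => by
          rw [show (l:ℝ) * φ - m * φ = -((m:ℝ) * φ - l * φ) by ring, Real.cos_neg]
      have e3 : ∑ k ∈ Finset.range (m+1), (((m:ℕ)+1:ℝ) - k) * Real.cos ((k:ℝ) * φ)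
          = ∑ k ∈ Finset.range m, ((m:ℝ) - k) * Real.cos ((k:ℝ) * φ)
            + ∑ k ∈ Finset.range m, Real.cos ((k:ℝ) * φ) + Real.cos ((m:ℝ) * φ) := by
        rw [Finset.sum_range_succ]
        have : ∀ k : ℕ, (((m:ℝ)+1) - k) * Real.cos ((k:ℝ) * φ)
            = ((m:ℝ) - k) * Real.cos ((k:ℝ) * φ) + Real.cos ((k:ℝ) * φ) := fun k => by ring
        simp only [this, Finset.sum_add_distrib]
        push_cast
        ring
      push_cast at e3 ⊢
      rw [e1, e2, e3]
      rw [show (m:ℝ) * φ - (m:ℝ) * φ = 0 by ring, Real.cos_zero]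
      ring

open Finset Polynomial intervalIntegral Real in
private lemma fejer' (m : ℕ) (φ : ℝ) :
    0 ≤ 2 * ∑ k ∈ Finset.range m, ((m:ℝ) - k) * Real.cos ((k:ℝ) * φ) - m := by
  rw [← GH' φ m]
  have key : ∑ j ∈ Finset.range m, ∑ l ∈ Finset.range m, Real.cos ((j:ℝ) * φ - l * φ)
      = (∑ j ∈ Finset.range m, Real.cos ((j:ℝ) * φ)) ^ 2
        + (∑ j ∈ Finset.range m, Real.sin ((j:ℝ) * φ)) ^ 2 := by
    rw [sq, sq, Finset.sum_mul_sum, Finset.sum_mul_sum, ← Finset.sum_add_distrib]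
    refine Finset.sum_congr rfl fun j _ => ?_
    rw [← Finset.sum_add_distrib]
    refine Finset.sum_congr rfl fun l _ => ?_
    rw [Real.cos_sub]
  rw [key]
  positivity

/-- Construction of a Fejér-kernel-type nonnegative polynomial of degree at most `2N - 2`,
equal to `1` at `t`, with small integral over `(-w₀, w₀)`. -/
theorem stmt8 (N : ℕ) (hN : 1 ≤ N) (w0 t : ℝ) (hw0 : 0 < w0) (ht : t ∈ Set.Ioo (-w0) w0) :
    ∃ S : Polynomial ℝ,
      S.natDegree ≤ 2 * N - 2 ∧ (∀ l : ℝ, 0 ≤ S.eval l) ∧ S.eval t = 1 ∧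
        (∫ l in Set.Ioo (-w0) w0, S.eval l) ≤
          2 * Real.pi * w0 / (if Odd N then (N : ℝ) else (N : ℝ) - 1) := by
  open Finset Polynomial intervalIntegral Real in
  obtain ⟨n, rfl⟩ : ∃ n, N = n + 1 := ⟨N - 1, by omega⟩
  obtain ⟨ht1, ht2⟩ := ht
  set τ : ℝ := t / w0 with hτdef
  have hτ1 : -1 ≤ τ := by rw [hτdef, le_div_iff₀ hw0]; linarith
  have hτ2 : τ ≤ 1 := by rw [hτdef, div_le_iff₀ hw0]; linarith
  set a : ℝ := Real.arccos τ with hadef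
  have hcos : Real.cos a = τ := Real.cos_arccos hτ1 hτ2
  set b : ℕ → ℝ := fun k => if k = 0 then 1 else 2 * (1 - (k:ℝ)/(n+1)) * Real.cos (k * a)
    with hbdef
  set f : ℝ → ℝ := fun θ => ∑ k ∈ Finset.range (n+1), b k * Real.cos ((k:ℝ) * θ) with hfdef
  set Q : Polynomial ℝ :=
    ∑ k ∈ Finset.range (n+1), Polynomial.C (b k) * Polynomial.Chebyshev.T ℝ (k:ℤ) with hQdef
  have hQev : ∀ θ : ℝ, Q.eval (Real.cos θ) = f θ := by
    intro θ
    rw [hQdef, hfdef, Polynomial.eval_finset_sum]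
    refine Finset.sum_congr rfl fun k _ => ?_
    rw [Polynomial.eval_mul, Polynomial.eval_C, Polynomial.Chebyshev.T_real_cos]
    push_cast
    ring
  have hQdeg : Q.natDegree ≤ n := by
    refine Polynomial.natDegree_sum_le_of_forall_le _ _ fun k hk => ?_
    refine le_trans (Polynomial.natDegree_mul_le) ?_
    simp only [Polynomial.natDegree_C, zero_add]
    exact le_trans (chebdeg' k) (by simpa using Nat.lt_succ_iff.mp (Finset.mem_range.mp hk))
  -- lower bound on f a via Fejér positivity
  have hfa_lb : ((n:ℝ)+1)/2 ≤ f a := by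
    have hne : ((n:ℝ)+1) ≠ 0 := by positivity
    have pt : ∀ k ∈ Finset.range (n+1),
        2*((n:ℝ)+1)*(b k * Real.cos ((k:ℝ) * a)) - 2*((((n:ℝ)+1)-k)*Real.cos ((k:ℝ)*(2*a)))
          = 2*(((n:ℝ)+1)-k) - (if k = 0 then 2*((n:ℝ)+1) else 0) := by
      intro k _
      rcases eq_or_ne k 0 with h0 | h0
      · subst h0; simp [hbdef]
      · simp only [hbdef, h0, if_false]
        rw [show (k:ℝ)*(2*a) = 2*((k:ℝ)*a) by ring, Real.cos_two_mul]
        field_simp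
        ring
    have hsum := Finset.sum_congr rfl pt
    rw [Finset.sum_sub_distrib, Finset.sum_sub_distrib, ← Finset.mul_sum, ← Finset.mul_sum,
      Finset.sum_ite_eq' (Finset.range (n+1)) 0 (fun _ => 2*((n:ℝ)+1))] at hsum
    simp only [Finset.mem_range, Nat.succ_pos, if_true, Nat.zero_lt_succ] at hsum
    have gauss : ∑ k ∈ Finset.range (n+1), (((n:ℝ)+1) - k) = ((n:ℝ)+1)^2 - ((n:ℝ)+1)*n/2 := by
      rw [Finset.sum_sub_distrib, sumid' (n+1), Finset.sum_const, Finset.card_range]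
      push_cast
      ring
    rw [show (∑ x ∈ Finset.range (n+1), 2 * (((n:ℝ)+1) - x))
        = 2 * ∑ x ∈ Finset.range (n+1), (((n:ℝ)+1) - x) from (Finset.mul_sum _ _ _).symm,
      gauss] at hsum
    have hfj := fejer' (n+1) (2*a)
    push_cast at hfj
    have hfa : f a = ∑ k ∈ Finset.range (n+1), b k * Real.cos ((k:ℝ) * a) := by rw [hfdef]
    nlinarith [hsum, hfj]
  have hfa_pos : 0 < f a := lt_of_lt_of_le (by positivity) hfa_lb
  -- orthogonality: value of ∫ f²
  have hI : ∫ θ in (0:ℝ)..π, (f θ)^2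
      = π * ∑ k ∈ Finset.range (n+1), (if k = 0 then 1 else 1/2) * (b k)^2 := by
    have expand : ∀ θ : ℝ, (f θ)^2 = ∑ j ∈ Finset.range (n+1), ∑ l ∈ Finset.range (n+1),
        (b j * b l) * (Real.cos ((j:ℝ) * θ) * Real.cos ((l:ℝ) * θ)) := by
      intro θ
      rw [hfdef, sq, Finset.sum_mul_sum]
      exact Finset.sum_congr rfl fun j _ => Finset.sum_congr rfl fun l _ => by ring
    have cont : ∀ j l : ℕ, Continuous fun θ : ℝ =>
        (b j * b l) * (Real.cos ((j:ℝ) * θ) * Real.cos ((l:ℝ) * θ)) := by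
      intro j l; fun_prop
    calc ∫ θ in (0:ℝ)..π, (f θ)^2
        = ∫ θ in (0:ℝ)..π, ∑ j ∈ Finset.range (n+1), ∑ l ∈ Finset.range (n+1),
            (b j * b l) * (Real.cos ((j:ℝ) * θ) * Real.cos ((l:ℝ) * θ)) :=
          intervalIntegral.integral_congr fun θ _ => expand θ
      _ = ∑ j ∈ Finset.range (n+1), ∫ θ in (0:ℝ)..π, ∑ l ∈ Finset.range (n+1),
            (b j * b l) * (Real.cos ((j:ℝ) * θ) * Real.cos ((l:ℝ) * θ)) := by
          refine intervalIntegral.integral_finset_sum fun j _ => ?_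
          exact (by fun_prop : Continuous fun θ : ℝ => ∑ l ∈ Finset.range (n+1),
            (b j * b l) * (Real.cos ((j:ℝ) * θ) * Real.cos ((l:ℝ) * θ))).intervalIntegrable _ _
      _ = ∑ j ∈ Finset.range (n+1), ∑ l ∈ Finset.range (n+1), ∫ θ in (0:ℝ)..π,
            (b j * b l) * (Real.cos ((j:ℝ) * θ) * Real.cos ((l:ℝ) * θ)) := by
          refine Finset.sum_congr rfl fun j _ => ?_
          exact intervalIntegral.integral_finset_sum fun l _ =>
            (cont j l).intervalIntegrable _ _
      _ = ∑ j ∈ Finset.range (n+1), ∑ l ∈ Finset.range (n+1),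
            (b j * b l) * (if j = l then (if j = 0 then π else π / 2) else 0) := by
          refine Finset.sum_congr rfl fun j _ => Finset.sum_congr rfl fun l _ => ?_
          rw [intervalIntegral.integral_const_mul, orth' j l]
      _ = ∑ j ∈ Finset.range (n+1), (b j * b j) * (if j = 0 then π else π / 2) := by
          refine Finset.sum_congr rfl fun j hj => ?_
          rw [Finset.sum_eq_single j]
          · simp
          · intro l _ hlj; simp [Ne.symm hlj]
          · intro h; exact absurd hj h
      _ = π * ∑ k ∈ Finset.range (n+1), (if k = 0 then 1 else 1/2) * (b k)^2 := by
          rw [Finset.mul_sum]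
          refine Finset.sum_congr rfl fun j _ => ?_
          rcases eq_or_ne j 0 with h | h <;> simp [h, sq] <;> ring
  -- comparison of coefficient sums
  have hA : ∑ k ∈ Finset.range (n+1), (if k = 0 then 1 else 1/2) * (b k)^2 ≤ f a := by
    rw [hfdef]
    refine Finset.sum_le_sum fun k hk => ?_
    rcases eq_or_ne k 0 with h | h
    · subst h; simp [hbdef]
    · simp only [hbdef, h, if_false]
      have hk' : (k:ℝ) ≤ n := by
        have := Finset.mem_range.mp hk; exact_mod_cast Nat.lt_succ_iff.mp this
      have hc1 : 0 ≤ 1 - (k:ℝ)/(n+1) := by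
        rw [sub_nonneg, div_le_one (by positivity)]; linarith
      have hc2 : (1:ℝ) - (k:ℝ)/(n+1) ≤ 1 := by
        have : 0 ≤ (k:ℝ)/(n+1) := by positivity
        linarith
      have hint : 0 ≤ (1 - (k:ℝ)/(n+1)) * (1 - (1 - (k:ℝ)/(n+1))) * (Real.cos ((k:ℝ)*a))^2 :=
        mul_nonneg (mul_nonneg hc1 (by linarith)) (sq_nonneg _)
      nlinarith [hint]
  refine ⟨(Polynomial.C (f a)⁻¹ * Q.comp (Polynomial.C w0⁻¹ * Polynomial.X))^2, ?_, ?_, ?_, ?_⟩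
  · -- degree bound
    rw [Polynomial.natDegree_pow]
    have h1 : (Polynomial.C (f a)⁻¹ * Q.comp (Polynomial.C w0⁻¹ * Polynomial.X)).natDegree
        ≤ n := by
      refine le_trans Polynomial.natDegree_mul_le ?_
      simp only [Polynomial.natDegree_C, zero_add]
      refine le_trans (Polynomial.natDegree_comp_le) ?_
      have h2 : (Polynomial.C w0⁻¹ * Polynomial.X : Polynomial ℝ).natDegree ≤ 1 :=
        le_trans Polynomial.natDegree_mul_le (by simp)
      calc Q.natDegree * (Polynomial.C w0⁻¹ * Polynomial.X : Polynomial ℝ).natDegree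
          ≤ n * 1 := Nat.mul_le_mul hQdeg h2
        _ = n := by ring
    omega
  · intro l
    simp only [Polynomial.eval_pow]
    positivity
  · simp only [Polynomial.eval_pow, Polynomial.eval_mul, Polynomial.eval_C,
      Polynomial.eval_comp, Polynomial.eval_X]
    rw [show w0⁻¹ * t = τ by rw [hτdef]; ring, ← hcos, hQev a,
      inv_mul_cancel₀ (ne_of_gt hfa_pos), one_pow]
  · -- the integral bound
    set g : ℝ → ℝ := fun u => ((f a)⁻¹ * Q.eval u)^2 with hgdef
    have hQcont : Continuous fun u : ℝ => Q.eval u := Q.continuous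
    have hgcont : Continuous g := by rw [hgdef]; exact (continuous_const.mul hQcont).pow 2
    have hgnonneg : ∀ u, 0 ≤ g u := fun u => sq_nonneg _
    have evalS : ∀ l : ℝ,
        ((Polynomial.C (f a)⁻¹ * Q.comp (Polynomial.C w0⁻¹ * Polynomial.X))^2).eval l
          = g (l / w0) := by
      intro l
      simp only [hgdef, Polynomial.eval_pow, Polynomial.eval_mul, Polynomial.eval_C,
        Polynomial.eval_comp, Polynomial.eval_X]
      rw [show w0⁻¹ * l = l / w0 by ring]
    have step1 : (∫ l in Set.Ioo (-w0) w0,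
        ((Polynomial.C (f a)⁻¹ * Q.comp (Polynomial.C w0⁻¹ * Polynomial.X))^2).eval l)
          = ∫ l in (-w0)..w0, g (l / w0) := by
      rw [← MeasureTheory.integral_Ioc_eq_integral_Ioo,
        ← intervalIntegral.integral_of_le (by linarith : -w0 ≤ w0)]
      exact intervalIntegral.integral_congr fun l _ => evalS l
    have step2 : (∫ l in (-w0)..w0, g (l / w0)) = w0 * ∫ u in (-1:ℝ)..1, g u := by
      rw [intervalIntegral.integral_comp_div g hw0.ne', smul_eq_mul,
        neg_div, div_self hw0.ne']
    have step3 : (∫ u in (-1:ℝ)..1, g u) = ∫ θ in (0:ℝ)..π, Real.sin θ * g (Real.cos θ) := by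
      have h := intervalIntegral.integral_comp_smul_deriv (a := (0:ℝ)) (b := π)
        (f := Real.cos) (f' := fun θ => -Real.sin θ) (g := g)
        (fun x _ => Real.hasDerivAt_cos x)
        ((Real.continuous_sin.neg).continuousOn) hgcont
      rw [Real.cos_zero, Real.cos_pi, intervalIntegral.integral_symm (-1:ℝ) 1] at h
      have h2 : (∫ θ in (0:ℝ)..π, (fun θ => -Real.sin θ) θ • (g ∘ Real.cos) θ)
          = - ∫ θ in (0:ℝ)..π, Real.sin θ * g (Real.cos θ) := by
        rw [← intervalIntegral.integral_neg]
        refine intervalIntegral.integral_congr fun θ _ => ?_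
        simp [smul_eq_mul]
      rw [h2] at h
      linarith [h]
    have step4 : (∫ θ in (0:ℝ)..π, Real.sin θ * g (Real.cos θ))
        ≤ ∫ θ in (0:ℝ)..π, g (Real.cos θ) := by
      refine intervalIntegral.integral_mono_on Real.pi_pos.le
        ((Real.continuous_sin.mul (hgcont.comp Real.continuous_cos)).intervalIntegrable _ _)
        ((hgcont.comp Real.continuous_cos).intervalIntegrable _ _) fun θ _ => ?_
      calc Real.sin θ * g (Real.cos θ) ≤ 1 * g (Real.cos θ) :=
            mul_le_mul_of_nonneg_right (Real.sin_le_one θ) (hgnonneg _)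
        _ = g (Real.cos θ) := one_mul _
    have step5 : (∫ θ in (0:ℝ)..π, g (Real.cos θ))
        = ((f a)⁻¹)^2 * ∫ θ in (0:ℝ)..π, (f θ)^2 := by
      rw [← intervalIntegral.integral_const_mul]
      refine intervalIntegral.integral_congr fun θ _ => ?_
      simp only [hgdef]
      rw [hQev θ, mul_pow]
    -- put everything together
    have hupper : (∫ l in Set.Ioo (-w0) w0,
        ((Polynomial.C (f a)⁻¹ * Q.comp (Polynomial.C w0⁻¹ * Polynomial.X))^2).eval l)
          ≤ Real.pi * w0 / f a := by
      rw [step1, step2]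
      have hbound : (∫ u in (-1:ℝ)..1, g u) ≤ Real.pi / f a := by
        rw [step3]
        refine le_trans step4 ?_
        rw [step5, hI]
        calc ((f a)⁻¹)^2 * (π * ∑ k ∈ Finset.range (n+1), (if k = 0 then 1 else 1/2) * (b k)^2)
            ≤ ((f a)⁻¹)^2 * (π * f a) := by
              refine mul_le_mul_of_nonneg_left ?_ (sq_nonneg _)
              exact mul_le_mul_of_nonneg_left hA Real.pi_pos.le
          _ = Real.pi / f a := by
              field_simp
      calc w0 * ∫ u in (-1:ℝ)..1, g u ≤ w0 * (Real.pi / f a) :=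
            mul_le_mul_of_nonneg_left hbound hw0.le
        _ = Real.pi * w0 / f a := by ring
    refine le_trans hupper ?_
    -- final arithmetic with N* 
    have hd : (0:ℝ) < (if Odd (n+1) then ((n+1:ℕ) : ℝ) else ((n+1:ℕ) : ℝ) - 1)
        ∧ (if Odd (n+1) then ((n+1:ℕ) : ℝ) else ((n+1:ℕ) : ℝ) - 1) ≤ ((n:ℝ)+1) := by
      rcases Nat.even_or_odd (n+1) with he | ho
      · have hn1 : 1 ≤ n := by
          rcases Nat.eq_zero_or_pos n with h0 | h0
          · exfalso; rw [h0] at he; simp at he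
          · exact h0
        have : ¬ Odd (n+1) := Nat.not_odd_iff_even.mpr he
        simp only [this, if_false]
        push_cast
        constructor
        · have : (1:ℝ) ≤ n := by exact_mod_cast hn1
          linarith
        · linarith
      · simp only [ho, if_true]
        push_cast
        exact ⟨by positivity, le_rfl⟩
    obtain ⟨hd1, hd2⟩ := hd
    have hfa2 : Real.pi * w0 / f a ≤ 2 * Real.pi * w0 / ((n:ℝ)+1) := by
      rw [div_le_div_iff₀ hfa_pos (by positivity)]
      have h1 : Real.pi * w0 * 2 ≤ 2 * Real.pi * w0 := by linarith [Real.pi_pos, hw0]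
      nlinarith [hfa_lb, Real.pi_pos, hw0, mul_pos Real.pi_pos hw0]
    refine le_trans hfa2 ?_
    have : ((n+1:ℕ):ℝ) = (n:ℝ)+1 := by push_cast; ring
    rw [this] at hd2 hd1
    push_cast
    exact div_le_div_of_nonneg_left (by positivity) hd1 hd2
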